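/- For every M₁ > 0 there exists a constant C > 0 depending only on M₁ such that the following holds. Let d, N ≥ 1 be integers, 0 < σ ≤ M₁, and let U₁, …, U_N : ℝ^d → ℝ be differentiable with average U = (1/N)·Σ_{i=1}^N U_i, satisfying for all y ∈ ℝ^d: (1/N)·Σ_{i=1}^N ‖∇U_i(y) − ∇U(y)‖⁸ ≤ (σ²·d)⁴, and ‖∇U_i(y)‖ ≤ M₁·√(‖y‖² + d) for every i. Let Y, Φ₁, …, Φ_N be ℝ^d-valued random vectors with finite eighth moments, and let θ be uniformly distributed on {1,…,N} and independent of (Y, Φ₁, …, Φ_N). Then E[‖∇U_θ(Y) − ∇U_θ(Φ_θ) + (1/N)·Σ_{i=1}^N ∇U_i(Φ_i) − ∇U(Y)‖⁸] ≤ C·((1/N)·Σ_{i=1}^N E‖Φ_i‖⁸ + d⁴). -/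

import Mathlib

open MeasureTheory

lemma pow8_add_le (x y : ℝ) (hx : 0 ≤ x) (hy : 0 ≤ y) :
    (x + y) ^ 8 ≤ 256 * (x ^ 8 + y ^ 8) := by
  have hm : x + y ≤ 2 * max x y := by
    rcases le_total x y with h | h
    · rw [max_eq_right h]; linarith
    · rw [max_eq_left h]; linarith
  have h0 : 0 ≤ x + y := by linarith
  have hmax : (max x y) ^ 8 ≤ x ^ 8 + y ^ 8 := by
    rcases le_total x y with h | h
    · rw [max_eq_right h]; nlinarith [pow_nonneg hx 8]
    · rw [max_eq_left h]; nlinarith [pow_nonneg hy 8]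
  calc (x + y) ^ 8 ≤ (2 * max x y) ^ 8 := pow_le_pow_left₀ h0 hm 8
    _ = 256 * (max x y) ^ 8 := by ring
    _ ≤ 256 * (x ^ 8 + y ^ 8) := by linarith

lemma pow4_add_le (x y : ℝ) (hx : 0 ≤ x) (hy : 0 ≤ y) :
    (x + y) ^ 4 ≤ 16 * (x ^ 4 + y ^ 4) := by
  have hm : x + y ≤ 2 * max x y := by
    rcases le_total x y with h | h
    · rw [max_eq_right h]; linarith
    · rw [max_eq_left h]; linarith
  have h0 : 0 ≤ x + y := by linarith
  have hmax : (max x y) ^ 4 ≤ x ^ 4 + y ^ 4 := by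
    rcases le_total x y with h | h
    · rw [max_eq_right h]; nlinarith [pow_nonneg hx 4]
    · rw [max_eq_left h]; nlinarith [pow_nonneg hy 4]
  calc (x + y) ^ 4 ≤ (2 * max x y) ^ 4 := pow_le_pow_left₀ h0 hm 4
    _ = 16 * (max x y) ^ 4 := by ring
    _ ≤ 16 * (x ^ 4 + y ^ 4) := by linarith

lemma growth8 {M₁ a D v : ℝ} (hM : 0 ≤ M₁) (ha : 0 ≤ a) (hD : 0 ≤ D) (hv : 0 ≤ v)
    (h : v ≤ M₁ * Real.sqrt (a ^ 2 + D)) : v ^ 8 ≤ 16 * M₁ ^ 8 * (a ^ 8 + D ^ 4) := by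
  have hs : (0:ℝ) ≤ a ^ 2 + D := by positivity
  have h2 : v ^ 8 ≤ (M₁ * Real.sqrt (a ^ 2 + D)) ^ 8 := pow_le_pow_left₀ hv h 8
  have h3 : (M₁ * Real.sqrt (a ^ 2 + D)) ^ 8 = M₁ ^ 8 * (a ^ 2 + D) ^ 4 := by
    rw [mul_pow]
    congr 1
    rw [show (8:ℕ) = 2 * 4 from rfl, pow_mul, Real.sq_sqrt hs]
  have h4 : (a ^ 2 + D) ^ 4 ≤ 16 * ((a ^ 2) ^ 4 + D ^ 4) := pow4_add_le _ _ (by positivity) hD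
  have h5 : (a ^ 2) ^ 4 = a ^ 8 := by ring
  nlinarith [pow_nonneg hM 8]

lemma avg_pow8_le {N : ℕ} (hN : 1 ≤ N) (a : Fin N → ℝ) (ha : ∀ i, 0 ≤ a i) :
    ((1 / (N:ℝ)) * ∑ i, a i) ^ 8 ≤ (1 / (N:ℝ)) * ∑ i, a i ^ 8 := by
  have hN0 : (0:ℝ) < N := by exact_mod_cast hN
  have h := pow_sum_div_card_le_sum_pow (s := Finset.univ) (f := a) (fun i _ => ha i) 7
  rw [Finset.card_univ, Fintype.card_fin] at h
  have h2 : ((1 / (N:ℝ)) * ∑ i, a i) ^ 8 = ((∑ i, a i) ^ 8 / (N:ℝ) ^ 7) * (1 / N) := by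
    rw [mul_pow, div_pow, one_pow, div_mul_div_comm]
    rw [show (N:ℝ)^7 * N = (N:ℝ)^8 by ring]
    ring
  rw [h2]
  calc ((∑ i, a i) ^ 8 / (N:ℝ) ^ 7) * (1 / N) ≤ (∑ i, a i ^ 8) * (1 / N) :=
        mul_le_mul_of_nonneg_right h (by positivity)
    _ = (1 / (N:ℝ)) * ∑ i, a i ^ 8 := mul_comm _ _

lemma grad_avg {d N : ℕ} (U : Fin N → EuclideanSpace ℝ (Fin d) → ℝ)
    (hU : ∀ i, Differentiable ℝ (U i)) (y : EuclideanSpace ℝ (Fin d)) :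
    gradient (fun z => (1 / (N:ℝ)) * ∑ j, U j z) y = (1 / (N:ℝ)) • ∑ j, gradient (U j) y := by
  have hsum : DifferentiableAt ℝ (fun z => ∑ j, U j z) y :=
    DifferentiableAt.fun_sum fun j _ => (hU j).differentiableAt
  unfold gradient
  rw [fderiv_const_mul hsum, fderiv_fun_sum fun j _ => (hU j).differentiableAt, _root_.map_smul,
    map_sum]

lemma measurable_gradient {d : ℕ} (f : EuclideanSpace ℝ (Fin d) → ℝ) :
    Measurable (fun y => gradient f y) :=
  ((InnerProductSpace.toDual ℝ (EuclideanSpace ℝ (Fin d))).symm.continuous.measurable).comp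
    (measurable_fderiv ℝ f)

set_option maxHeartbeats 2000000 in
theorem stmt_10 : ∀ M₁ : ℝ, 0 < M₁ → ∃ C : ℝ, 0 < C ∧
    ∀ d N : ℕ, 1 ≤ d → 1 ≤ N → ∀ σ : ℝ, 0 < σ → σ ≤ M₁ →
    ∀ U : Fin N → EuclideanSpace ℝ (Fin d) → ℝ,
    (∀ i, Differentiable ℝ (U i)) →
    (∀ y : EuclideanSpace ℝ (Fin d),
      (1 / (N : ℝ)) * ∑ i,
          ‖gradient (U i) y - gradient (fun z => (1 / (N : ℝ)) * ∑ j, U j z) y‖ ^ 8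
        ≤ (σ ^ 2 * d) ^ 4) →
    (∀ (i : Fin N) (y : EuclideanSpace ℝ (Fin d)),
      ‖gradient (U i) y‖ ≤ M₁ * Real.sqrt (‖y‖ ^ 2 + d)) →
    ∀ (Ω : Type) [MeasurableSpace Ω] (μ : Measure Ω), IsProbabilityMeasure μ →
    ∀ (Y : Ω → EuclideanSpace ℝ (Fin d)) (Φ : Fin N → Ω → EuclideanSpace ℝ (Fin d))
      (θ : Ω → Fin N),
    Measurable Y → (∀ i, Measurable (Φ i)) → Measurable θ →
    (∀ j : Fin N, μ (θ ⁻¹' {j}) = (N : ENNReal)⁻¹) →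
    ProbabilityTheory.IndepFun θ (fun ω => (Y ω, fun i => Φ i ω)) μ →
    Integrable (fun ω => ‖Y ω‖ ^ 8) μ →
    (∀ i, Integrable (fun ω => ‖Φ i ω‖ ^ 8) μ) →
    (∫ ω, ‖gradient (U (θ ω)) (Y ω) - gradient (U (θ ω)) (Φ (θ ω) ω) +
        (N : ℝ)⁻¹ • (∑ i, gradient (U i) (Φ i ω)) -
        gradient (fun z => (1 / (N : ℝ)) * ∑ j, U j z) (Y ω)‖ ^ 8 ∂μ)
      ≤ C * ((1 / (N : ℝ)) * (∑ i, ∫ ω, ‖Φ i ω‖ ^ 8 ∂μ) + d ^ 4) := by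
  intro M₁ hM₁
  refine ⟨4194304 * M₁ ^ 8, by positivity, ?_⟩
  intro d N hd hN σ hσ hσM U hU hvar hgrow Ω _ μ hμ Y Φ θ mY mΦ mθ hθlaw hind hYint hΦint
  have hN0 : (0:ℝ) < N := by exact_mod_cast hN
  have hd0 : (0:ℝ) ≤ d := by positivity
  set K := M₁ ^ 8 with hK_def
  have hK0 : 0 ≤ K := by positivity
  set Gb := gradient (fun z => (1 / (N:ℝ)) * ∑ j, U j z) with hGb_def
  have hGbavg : ∀ y, Gb y = (1 / (N:ℝ)) • ∑ j, gradient (U j) y := fun y => grad_avg U hU y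
  -- growth bounds
  have hg8 : ∀ (i : Fin N) y, ‖gradient (U i) y‖ ^ 8 ≤ 16 * K * (‖y‖ ^ 8 + (d:ℝ) ^ 4) :=
    fun i y => growth8 hM₁.le (norm_nonneg y) hd0 (norm_nonneg _) (hgrow i y)
  have hGbb : ∀ y, ‖Gb y‖ ≤ M₁ * Real.sqrt (‖y‖ ^ 2 + d) := by
    intro y
    rw [hGbavg y, norm_smul]
    have h1 : ‖∑ j, gradient (U j) y‖ ≤ ∑ _j : Fin N, (M₁ * Real.sqrt (‖y‖ ^ 2 + d)) :=
      (norm_sum_le _ _).trans (Finset.sum_le_sum fun j _ => hgrow j y)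
    rw [Finset.sum_const, Finset.card_univ, Fintype.card_fin, nsmul_eq_mul] at h1
    have h2 : ‖(1/(N:ℝ))‖ = 1/(N:ℝ) := by
      rw [Real.norm_eq_abs, abs_of_pos (by positivity)]
    rw [h2]
    calc (1/(N:ℝ)) * ‖∑ j, gradient (U j) y‖
        ≤ (1/(N:ℝ)) * ((N:ℝ) * (M₁ * Real.sqrt (‖y‖ ^ 2 + d))) :=
          mul_le_mul_of_nonneg_left h1 (by positivity)
      _ = M₁ * Real.sqrt (‖y‖ ^ 2 + d) := by field_simp
  have hGb8 : ∀ y, ‖Gb y‖ ^ 8 ≤ 16 * K * (‖y‖ ^ 8 + (d:ℝ) ^ 4) :=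
    fun y => growth8 hM₁.le (norm_nonneg y) hd0 (norm_nonneg _) (hGbb y)
  -- variance bound
  have hvar' : ∀ y, (1 / (N:ℝ)) * ∑ j, ‖gradient (U j) y - Gb y‖ ^ 8 ≤ K * (d:ℝ) ^ 4 := by
    intro y
    refine (hvar y).trans ?_
    have h1 : σ ^ 8 ≤ M₁ ^ 8 := pow_le_pow_left₀ hσ.le hσM 8
    have h2 : (σ ^ 2 * (d:ℝ)) ^ 4 = σ ^ 8 * (d:ℝ) ^ 4 := by ring
    rw [h2, hK_def]
    exact mul_le_mul_of_nonneg_right h1 (by positivity)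
  -- the average Φ-moment
  set T : Ω → ℝ := fun ω => (1 / (N:ℝ)) * ∑ i, ‖Φ i ω‖ ^ 8 with hT_def
  have hTnn : ∀ ω, 0 ≤ T ω := by
    intro ω
    apply mul_nonneg (by positivity)
    exact Finset.sum_nonneg fun i _ => by positivity
  have hTint : Integrable T μ :=
    (integrable_finset_sum Finset.univ fun i _ => hΦint i).const_mul _
  -- the conditional integrands
  set h : Fin N → Ω → ℝ := fun j ω =>
    ‖gradient (U j) (Y ω) - gradient (U j) (Φ j ω) +
      (N:ℝ)⁻¹ • (∑ i, gradient (U i) (Φ i ω)) - Gb (Y ω)‖ ^ 8 with hh_def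
  -- B-part bound
  have hB8 : ∀ (j : Fin N) ω,
      ‖(N:ℝ)⁻¹ • (∑ i, gradient (U i) (Φ i ω)) - gradient (U j) (Φ j ω)‖ ^ 8
        ≤ 4096 * K * (T ω + ‖Φ j ω‖ ^ 8 + 2 * (d:ℝ) ^ 4) := by
    intro j ω
    have hc : ‖(N:ℝ)⁻¹ • (∑ i, gradient (U i) (Φ i ω))‖
        ≤ (1/(N:ℝ)) * ∑ i, ‖gradient (U i) (Φ i ω)‖ := by
      rw [norm_smul, Real.norm_eq_abs, abs_of_nonneg (by positivity), ← one_div]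
      exact mul_le_mul_of_nonneg_left (norm_sum_le _ _) (by positivity)
    have hc8 : ‖(N:ℝ)⁻¹ • (∑ i, gradient (U i) (Φ i ω))‖ ^ 8 ≤ 16 * K * (T ω + (d:ℝ) ^ 4) := by
      calc ‖(N:ℝ)⁻¹ • (∑ i, gradient (U i) (Φ i ω))‖ ^ 8
          ≤ ((1/(N:ℝ)) * ∑ i, ‖gradient (U i) (Φ i ω)‖) ^ 8 :=
            pow_le_pow_left₀ (norm_nonneg _) hc 8
        _ ≤ (1/(N:ℝ)) * ∑ i, ‖gradient (U i) (Φ i ω)‖ ^ 8 :=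
            avg_pow8_le hN _ fun i => norm_nonneg _
        _ ≤ (1/(N:ℝ)) * ∑ i, (16 * K * (‖Φ i ω‖ ^ 8 + (d:ℝ) ^ 4)) := by
            apply mul_le_mul_of_nonneg_left (Finset.sum_le_sum fun i _ => hg8 i _) (by positivity)
        _ = 16 * K * (T ω + (d:ℝ) ^ 4) := by
            rw [hT_def]
            simp only [mul_add, Finset.sum_add_distrib, Finset.sum_const, Finset.card_univ,
              Fintype.card_fin, nsmul_eq_mul, ← Finset.mul_sum]
            field_simp
    have hb8 : ‖gradient (U j) (Φ j ω)‖ ^ 8 ≤ 16 * K * (‖Φ j ω‖ ^ 8 + (d:ℝ) ^ 4) := hg8 j _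
    have h1 : ‖(N:ℝ)⁻¹ • (∑ i, gradient (U i) (Φ i ω)) - gradient (U j) (Φ j ω)‖
        ≤ ‖(N:ℝ)⁻¹ • (∑ i, gradient (U i) (Φ i ω))‖ + ‖gradient (U j) (Φ j ω)‖ :=
      norm_sub_le _ _
    have h2 := pow_le_pow_left₀ (norm_nonneg _) h1 8
    have h3 := pow8_add_le ‖(N:ℝ)⁻¹ • (∑ i, gradient (U i) (Φ i ω))‖
      ‖gradient (U j) (Φ j ω)‖ (norm_nonneg _) (norm_nonneg _)
    nlinarith [hTnn ω]
  -- A-part crude bound (for integrability)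
  have hA8 : ∀ (j : Fin N) y, ‖gradient (U j) y - Gb y‖ ^ 8 ≤ 8192 * K * (‖y‖ ^ 8 + (d:ℝ) ^ 4) := by
    intro j y
    have h1 : ‖gradient (U j) y - Gb y‖ ≤ ‖gradient (U j) y‖ + ‖Gb y‖ := norm_sub_le _ _
    have h2 := pow_le_pow_left₀ (norm_nonneg _) h1 8
    have h3 := pow8_add_le ‖gradient (U j) y‖ ‖Gb y‖ (norm_nonneg _) (norm_nonneg _)
    nlinarith [hg8 j y, hGb8 y]
  -- splitting bound
  have hAB : ∀ (j : Fin N) ω, h j ω ≤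
      256 * (‖gradient (U j) (Y ω) - Gb (Y ω)‖ ^ 8 +
        ‖(N:ℝ)⁻¹ • (∑ i, gradient (U i) (Φ i ω)) - gradient (U j) (Φ j ω)‖ ^ 8) := by
    intro j ω
    have e : gradient (U j) (Y ω) - gradient (U j) (Φ j ω) +
        (N:ℝ)⁻¹ • (∑ i, gradient (U i) (Φ i ω)) - Gb (Y ω)
        = (gradient (U j) (Y ω) - Gb (Y ω)) +
          ((N:ℝ)⁻¹ • (∑ i, gradient (U i) (Φ i ω)) - gradient (U j) (Φ j ω)) := by abel
    rw [hh_def]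
    simp only []
    rw [e]
    have h1 := norm_add_le (gradient (U j) (Y ω) - Gb (Y ω))
      ((N:ℝ)⁻¹ • (∑ i, gradient (U i) (Φ i ω)) - gradient (U j) (Φ j ω))
    have h2 := pow_le_pow_left₀ (norm_nonneg _) h1 8
    have h3 := pow8_add_le ‖gradient (U j) (Y ω) - Gb (Y ω)‖
      ‖(N:ℝ)⁻¹ • (∑ i, gradient (U i) (Φ i ω)) - gradient (U j) (Φ j ω)‖
      (norm_nonneg _) (norm_nonneg _)
    linarith
  -- measurability of h j
  have hhmeas : ∀ j, Measurable (h j) := by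
    intro j
    apply Measurable.pow_const
    apply Measurable.norm
    apply Measurable.sub
    apply Measurable.add
    apply Measurable.sub
    · exact (measurable_gradient (U j)).comp mY
    · exact (measurable_gradient (U j)).comp (mΦ j)
    · exact (Finset.measurable_sum Finset.univ fun i _ =>
        (measurable_gradient (U i)).comp (mΦ i)).fun_const_smul _
    · exact (measurable_gradient _).comp mY
  -- integrability of h j
  have hhnn : ∀ j ω, 0 ≤ h j ω := fun j ω => by rw [hh_def]; positivity
  have hhint : ∀ j, Integrable (h j) μ := by
    intro j
    have hDint : Integrable (fun ω =>
        256 * (8192 * K * (‖Y ω‖ ^ 8 + (d:ℝ) ^ 4) +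
          4096 * K * (T ω + ‖Φ j ω‖ ^ 8 + 2 * (d:ℝ) ^ 4))) μ := by
      apply Integrable.const_mul
      apply Integrable.add
      · exact (hYint.add (integrable_const _)).const_mul _
      · exact (((hTint.add (hΦint j)).add (integrable_const _))).const_mul _
    refine Integrable.mono' hDint (hhmeas j).aestronglyMeasurable ?_
    filter_upwards with ω
    rw [Real.norm_eq_abs, abs_of_nonneg (hhnn j ω)]
    have h1 := hAB j ω
    have h2 := hA8 j (Y ω)
    have h3 := hB8 j ω
    linarith
  -- pointwise bound on the average
  have hpt : ∀ ω, (1 / (N:ℝ)) * ∑ j, h j ω ≤ 4194304 * K * (T ω + (d:ℝ) ^ 4) := by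
    intro ω
    have s1 : ∑ j, h j ω ≤ ∑ j, (256 * ‖gradient (U j) (Y ω) - Gb (Y ω)‖ ^ 8 +
        1048576 * K * (T ω + ‖Φ j ω‖ ^ 8 + 2 * (d:ℝ) ^ 4)) := by
      refine Finset.sum_le_sum fun j _ => ?_
      have h1 := hAB j ω
      have h2 := hB8 j ω
      linarith
    have s2 : ∑ j : Fin N, (256 * ‖gradient (U j) (Y ω) - Gb (Y ω)‖ ^ 8 +
        1048576 * K * (T ω + ‖Φ j ω‖ ^ 8 + 2 * (d:ℝ) ^ 4))
        = 256 * (∑ j, ‖gradient (U j) (Y ω) - Gb (Y ω)‖ ^ 8) +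
          1048576 * K * ((N:ℝ) * T ω + (∑ j, ‖Φ j ω‖ ^ 8) + (N:ℝ) * (2 * (d:ℝ) ^ 4)) := by
      simp only [Finset.sum_add_distrib, ← Finset.mul_sum, Finset.sum_const,
        Finset.card_univ, Fintype.card_fin, nsmul_eq_mul]
      ring
    have s3 : (1 / (N:ℝ)) * ∑ j, h j ω ≤ (1 / (N:ℝ)) *
        (256 * (∑ j, ‖gradient (U j) (Y ω) - Gb (Y ω)‖ ^ 8) +
          1048576 * K * ((N:ℝ) * T ω + (∑ j, ‖Φ j ω‖ ^ 8) + (N:ℝ) * (2 * (d:ℝ) ^ 4))) := by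
      rw [← s2]
      exact mul_le_mul_of_nonneg_left s1 (by positivity)
    have s4 : (1 / (N:ℝ)) *
        (256 * (∑ j, ‖gradient (U j) (Y ω) - Gb (Y ω)‖ ^ 8) +
          1048576 * K * ((N:ℝ) * T ω + (∑ j, ‖Φ j ω‖ ^ 8) + (N:ℝ) * (2 * (d:ℝ) ^ 4)))
        = 256 * ((1 / (N:ℝ)) * ∑ j, ‖gradient (U j) (Y ω) - Gb (Y ω)‖ ^ 8) +
          1048576 * K * (T ω + T ω + 2 * (d:ℝ) ^ 4) := by
      rw [hT_def]
      field_simp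
    have s5 := hvar' (Y ω)
    have hTω := hTnn ω
    have hd4 : (0:ℝ) ≤ (d:ℝ) ^ 4 := by positivity
    have hKT : 0 ≤ K * T ω := mul_nonneg hK0 hTω
    have hKd : 0 ≤ K * (d:ℝ) ^ 4 := mul_nonneg hK0 hd4
    rw [s4] at s3
    linarith [s3, s5, hKT, hKd]
  -- indicator functions
  have hιmeas : ∀ j : Fin N, Measurable (fun ω => if θ ω = j then (1:ℝ) else 0) :=
    fun j => (measurable_of_countable (fun k : Fin N => if k = j then (1:ℝ) else 0)).comp mθ
  have hιbdd : ∀ (j : Fin N) ω, ‖if θ ω = j then (1:ℝ) else 0‖ ≤ 1 := by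
    intro j ω
    split <;> simp
  have hιint : ∀ j : Fin N, Integrable (fun ω => if θ ω = j then (1:ℝ) else 0) μ := by
    intro j
    refine Integrable.mono' (integrable_const (1:ℝ)) (hιmeas j).aestronglyMeasurable ?_
    filter_upwards with ω
    exact hιbdd j ω
  have hιeq : ∀ j : Fin N, (∫ ω, (if θ ω = j then (1:ℝ) else 0) ∂μ) = (N:ℝ)⁻¹ := by
    intro j
    have e : (fun ω => if θ ω = j then (1:ℝ) else 0)
        = (θ ⁻¹' {j}).indicator (fun _ => (1:ℝ)) := by
      funext ω
      by_cases hc : θ ω = j <;> simp [Set.indicator_apply, hc]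
    rw [e, integral_indicator_const _ (mθ (MeasurableSet.singleton j)), measureReal_def, hθlaw j]
    simp [ENNReal.toReal_inv]
  -- independence
  have hIF : ∀ j : Fin N, ProbabilityTheory.IndepFun
      (fun ω => if θ ω = j then (1:ℝ) else 0) (h j) μ := by
    intro j
    have hφm : Measurable (fun p : (EuclideanSpace ℝ (Fin d)) × (Fin N → EuclideanSpace ℝ (Fin d)) =>
        ‖gradient (U j) p.1 - gradient (U j) (p.2 j) +
          (N:ℝ)⁻¹ • (∑ i, gradient (U i) (p.2 i)) - Gb p.1‖ ^ 8) := by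
      apply Measurable.pow_const
      apply Measurable.norm
      apply Measurable.sub
      apply Measurable.add
      apply Measurable.sub
      · exact (measurable_gradient (U j)).comp measurable_fst
      · exact (measurable_gradient (U j)).comp ((measurable_pi_apply j).comp measurable_snd)
      · exact (Finset.measurable_sum Finset.univ fun i _ =>
          (measurable_gradient (U i)).comp ((measurable_pi_apply i).comp measurable_snd)).fun_const_smul _
      · exact (measurable_gradient _).comp measurable_fst
    exact hind.comp (measurable_of_countable (fun k : Fin N => if k = j then (1:ℝ) else 0)) hφm
  -- products integrable
  have hprod_int : ∀ j : Fin N,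
      Integrable (fun ω => (if θ ω = j then (1:ℝ) else 0) * h j ω) μ := by
    intro j
    exact (hhint j).bdd_mul (hιmeas j).aestronglyMeasurable (ae_of_all _ (hιbdd j))
  -- decomposition of the integrand
  have hfeq : (fun ω => h (θ ω) ω)
      = fun ω => ∑ j, (if θ ω = j then (1:ℝ) else 0) * h j ω := by
    funext ω
    have e : ∀ j : Fin N, (if θ ω = j then (1:ℝ) else 0) * h j ω
        = if θ ω = j then h j ω else 0 := by
      intro j
      split <;> simp
    rw [Finset.sum_congr rfl fun j _ => e j, Finset.sum_ite_eq]
    simp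
  -- the key identity
  have key1 : (∫ ω, h (θ ω) ω ∂μ) = ∑ j, (N:ℝ)⁻¹ * ∫ ω, h j ω ∂μ := by
    rw [hfeq, integral_finset_sum _ fun j _ => hprod_int j]
    refine Finset.sum_congr rfl fun j _ => ?_
    have := (hIF j).integral_mul_eq_mul_integral (hιint j).1 (hhint j).1
    rw [show (fun ω => (if θ ω = j then (1:ℝ) else 0) * h j ω)
        = (fun ω => if θ ω = j then (1:ℝ) else 0) * h j from rfl] at *
    rw [this, hιeq j]
  have key2 : ∑ j : Fin N, (N:ℝ)⁻¹ * ∫ ω, h j ω ∂μ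
      = ∫ ω, (1 / (N:ℝ)) * ∑ j, h j ω ∂μ := by
    rw [integral_const_mul, integral_finset_sum _ fun j _ => hhint j, Finset.mul_sum, one_div]
  have key3 : (∫ ω, (1 / (N:ℝ)) * ∑ j, h j ω ∂μ)
      ≤ ∫ ω, 4194304 * K * (T ω + (d:ℝ) ^ 4) ∂μ := by
    refine integral_mono ?_ ?_ hpt
    · exact (integrable_finset_sum _ fun j _ => hhint j).const_mul _
    · exact (hTint.add (integrable_const _)).const_mul _
  have key4 : (∫ ω, 4194304 * K * (T ω + (d:ℝ) ^ 4) ∂μ)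
      = 4194304 * K * ((1 / (N:ℝ)) * (∑ i, ∫ ω, ‖Φ i ω‖ ^ 8 ∂μ) + (d:ℝ) ^ 4) := by
    rw [integral_const_mul, integral_add hTint (integrable_const _), integral_const]
    have hTval : (∫ ω, T ω ∂μ) = (1 / (N:ℝ)) * ∑ i, ∫ ω, ‖Φ i ω‖ ^ 8 ∂μ := by
      rw [hT_def]
      rw [integral_const_mul, integral_finset_sum _ fun i _ => hΦint i]
    rw [hTval]
    simp [measure_univ]
  calc (∫ ω, ‖gradient (U (θ ω)) (Y ω) - gradient (U (θ ω)) (Φ (θ ω) ω) +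
        (N : ℝ)⁻¹ • (∑ i, gradient (U i) (Φ i ω)) - Gb (Y ω)‖ ^ 8 ∂μ)
      = ∫ ω, h (θ ω) ω ∂μ := rfl
    _ = ∑ j, (N:ℝ)⁻¹ * ∫ ω, h j ω ∂μ := key1
    _ = ∫ ω, (1 / (N:ℝ)) * ∑ j, h j ω ∂μ := key2
    _ ≤ ∫ ω, 4194304 * K * (T ω + (d:ℝ) ^ 4) ∂μ := key3
    _ = 4194304 * K * ((1 / (N:ℝ)) * (∑ i, ∫ ω, ‖Φ i ω‖ ^ 8 ∂μ) + (d:ℝ) ^ 4) := key4
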